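/- Let q > 0. (i) For every f ∈ L¹(ℝ;ℂ) and every k ∈ ℝ, ∫_ℝ e^{-iky} ( (1/(2π)) ∫_ℝ (q/(q² + (y-t)²)) f(t) dt ) dy = (1/2) e^{-q|k|} f̂(k). (ii) Consequently, if f_R, f_r ∈ L¹(ℝ;ℂ) satisfy ∫ f_R + ∫ f_r = 0, then the functions G_R(y) = (1/(2π)) ∫_ℝ (q/(q² + (y-t)²)) f_r(t) dt and G_r(y) = (1/(2π)) ∫_ℝ (q/(q² + (y-t)²)) f_R(t) dt satisfy Ĝ_R(k) = (1/2) e^{-q|k|} f̂_r(k) and Ĝ_r(k) = (1/2) e^{-q|k|} f̂_R(k) for all k; in diagonalized form, (Ĝ_r - Ĝ_R)/√2 = -(1/2) e^{-q|k|} (f̂_r - f̂_R)/√2 and (Ĝ_r + Ĝ_R)/√2 = (1/2) e^{-q|k|} (f̂_r + f̂_R)/√2. -/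

import Mathlib

/-!
The transform of `e^{-q|t|}` is `2q / (q² + k²)`, computed by splitting the line at `0`.
Fourier inversion turns this around: the kernel `q / (2π (q² + u²))` of `poissonConv q` has
transform `e^{-q|k|} / 2`, and the convolution theorem makes `poissonConv q` multiplication by
that symbol. Part (ii) applies this to each component; the diagonal form is then linear algebra.
-/

open MeasureTheory Set Real

noncomputable section

/-- The unnormalized Fourier transform `ĝ(k) = ∫ g(t) e^{-ikt} dt`. -/
def fourierHat (g : ℝ → ℂ) (k : ℝ) : ℂ :=
  ∫ t : ℝ, g t * Complex.exp (-(Complex.I * k * t))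

/-- The Poisson-kernel convolution `(P_q * f)(y) = (1/(2π)) ∫ q/(q² + (y-t)²) f(t) dt`. -/
def poissonConv (q : ℝ) (f : ℝ → ℂ) (y : ℝ) : ℂ :=
  (1/(2*π) : ℝ) * ∫ t : ℝ, ((q / (q^2 + (y - t)^2) : ℝ) : ℂ) * f t

open FourierTransform Convolution
open Complex (I)

theorem fourierHat_eq_fourier (g : ℝ → ℂ) (k : ℝ) : fourierHat g k = 𝓕 g (k / (2 * π)) := by
  rw [fourierHat, Real.fourier_real_eq_integral_exp_smul]
  congr 1 with t
  rw [smul_eq_mul, mul_comm]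
  congr 2
  push_cast
  field_simp

theorem fourierHat_two_pi_mul (g : ℝ → ℂ) (ξ : ℝ) : fourierHat g (2 * π * ξ) = 𝓕 g ξ := by
  rw [fourierHat_eq_fourier, mul_div_cancel_left₀ _ (by positivity)]

theorem fourierHat_convolution {f g : ℝ → ℂ} (hf : Integrable f) (hg : Integrable g) (k : ℝ) :
    fourierHat (f ⋆[ContinuousLinearMap.mul ℂ ℂ] g) k = fourierHat f k * fourierHat g k := by
  simp only [fourierHat_eq_fourier, Real.fourier_mul_convolution_eq hf hg]

theorem fourierHat_inversion {g : ℝ → ℂ} {x : ℝ} (hg : Integrable g)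
    (hĝ : Integrable (fourierHat g)) (hx : ContinuousAt g x) :
    ((1 / (2 * π) : ℝ) : ℂ) * ∫ k : ℝ, Complex.exp (I * k * x) * fourierHat g k = g x := by
  have h𝓕g : Integrable (𝓕 g) := by
    simpa only [fourierHat_two_pi_mul] using hĝ.comp_mul_left' (R := 2 * π) (by positivity)
  rw [← hg.fourierInv_fourier_eq h𝓕g hx, Real.fourierInv_eq']
  calc _ = |(2 * π)⁻¹| • ∫ k : ℝ, Complex.exp (I * k * x) * fourierHat g k := by
        rw [abs_of_pos (by positivity), Complex.real_smul, one_div]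
    _ = ∫ ξ : ℝ, Complex.exp (I * ↑(2 * π * ξ) * x) * fourierHat g (2 * π * ξ) :=
        (Measure.integral_comp_mul_left _ _).symm
    _ = _ := by
        congr 1 with ξ
        rw [fourierHat_two_pi_mul, smul_eq_mul]
        congr 2
        simp only [RCLike.inner_apply, conj_trivial]
        push_cast
        ring

def poissonConvKernel (q u : ℝ) : ℂ := ((1 / (2 * π) * (q / (q ^ 2 + u ^ 2)) : ℝ) : ℂ)

theorem poissonConv_eq_convolution (q : ℝ) (f : ℝ → ℂ) :
    poissonConv q f = f ⋆[ContinuousLinearMap.mul ℂ ℂ] poissonConvKernel q := by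
  ext y
  rw [poissonConv, convolution_def, ← integral_const_mul]
  congr 1 with t
  simp only [poissonConvKernel, ContinuousLinearMap.mul_apply']
  push_cast
  ring

section

variable {q : ℝ}

theorem integrable_exp_neg_mul_abs (hq : 0 < q) :
    Integrable fun t : ℝ => Real.exp (-(q * |t|)) := by
  have hIic : IntegrableOn (fun t : ℝ => Real.exp (-(q * |t|))) (Iic 0) :=
    (integrableOn_exp_mul_Iic hq 0).congr_fun
      (fun t (ht : t ≤ 0) => by simp [abs_of_nonpos ht]) measurableSet_Iic
  have hIoi : IntegrableOn (fun t : ℝ => Real.exp (-(q * |t|))) (Ioi 0) :=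
    (integrableOn_exp_mul_Ioi (neg_lt_zero.2 hq) 0).congr_fun
      (fun t (ht : 0 < t) => by simp [abs_of_pos ht]) measurableSet_Ioi
  simpa only [Iic_union_Ioi, integrableOn_univ] using hIic.union hIoi

theorem fourierHat_exp_neg_mul_abs (hq : 0 < q) (k : ℝ) :
    fourierHat (fun t => (Real.exp (-(q * |t|)) : ℂ)) k
      = ((2 * q / (q ^ 2 + k ^ 2) : ℝ) : ℂ) := by
  have hIic : 0 < ((q : ℂ) - I * k).re := by simpa using hq
  have hIoi : (-(q : ℂ) - I * k).re < 0 := by simpa using hq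
  have eqIic : EqOn (fun t : ℝ => (Real.exp (-(q * |t|)) : ℂ) * Complex.exp (-(I * k * t)))
      (fun t : ℝ => Complex.exp ((q - I * k) * t)) (Iic 0) := fun t (ht : t ≤ 0) => by
    simp only [abs_of_nonpos ht, Complex.ofReal_exp, ← Complex.exp_add]
    push_cast
    ring_nf
  have eqIoi : EqOn (fun t : ℝ => (Real.exp (-(q * |t|)) : ℂ) * Complex.exp (-(I * k * t)))
      (fun t : ℝ => Complex.exp ((-q - I * k) * t)) (Ioi 0) := fun t (ht : 0 < t) => by
    simp only [abs_of_pos ht, Complex.ofReal_exp, ← Complex.exp_add]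
    push_cast
    ring_nf
  rw [fourierHat, ← intervalIntegral.integral_Iic_add_Ioi
      ((integrableOn_exp_mul_complex_Iic hIic 0).congr_fun eqIic.symm measurableSet_Iic)
      ((integrableOn_exp_mul_complex_Ioi hIoi 0).congr_fun eqIoi.symm measurableSet_Ioi),
    setIntegral_congr_fun measurableSet_Iic eqIic, setIntegral_congr_fun measurableSet_Ioi eqIoi,
    integral_exp_mul_complex_Iic hIic, integral_exp_mul_complex_Ioi hIoi]
  have h₁ : (q : ℂ) - I * k ≠ 0 := fun h => by simp [h] at hIic
  have h₂ : -(q : ℂ) - I * k ≠ 0 := fun h => by simp [h] at hIoi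
  have h₃ : (q : ℂ) ^ 2 + k ^ 2 ≠ 0 := by exact_mod_cast (by positivity : q ^ 2 + k ^ 2 ≠ 0)
  simp only [Complex.ofReal_zero, mul_zero, Complex.exp_zero]
  push_cast
  field_simp
  linear_combination (-2 * q * k ^ 2 : ℂ) * Complex.I_sq

theorem integrable_poissonConvKernel (hq : 0 < q) : Integrable (poissonConvKernel q) := by
  have h : Integrable fun u : ℝ => 1 / (2 * π) * (q / (q ^ 2 + u ^ 2)) := by
    refine ((integrable_inv_one_add_sq.comp_mul_left' (inv_ne_zero hq.ne')).const_mul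
      (1 / (2 * π) * q⁻¹)).congr (.of_forall fun u => ?_)
    field_simp
  exact h.ofReal

theorem fourierHat_poissonConvKernel (hq : 0 < q) (k : ℝ) :
    fourierHat (poissonConvKernel q) k = ((1 / 2 * Real.exp (-(q * |k|)) : ℝ) : ℂ) := by
  set g : ℝ → ℂ := fun t => (Real.exp (-(q * |t|)) : ℂ)
  have hĝ : fourierHat g = fun u => 4 * π * poissonConvKernel q u := by
    ext u
    rw [fourierHat_exp_neg_mul_abs hq, poissonConvKernel]
    push_cast
    field_simp
    ring
  have hg_cont : Continuous g := by fun_prop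
  calc fourierHat (poissonConvKernel q) k
      = 1 / 2 * (((1 / (2 * π) : ℝ) : ℂ) *
          ∫ u : ℝ, Complex.exp (I * u * ↑(-k)) * fourierHat g u) := by
        rw [hĝ, fourierHat, ← integral_const_mul, ← integral_const_mul]
        congr 1 with u
        push_cast
        field_simp
        ring_nf
    _ = 1 / 2 * g (-k) := by
        rw [fourierHat_inversion (g := g) (integrable_exp_neg_mul_abs hq).ofReal
          (hĝ ▸ (integrable_poissonConvKernel hq).const_mul _) hg_cont.continuousAt]
    _ = _ := by simp [g, abs_neg]

theorem fourierHat_poissonConv (hq : 0 < q) {f : ℝ → ℂ} (hf : Integrable f) (k : ℝ) :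
    fourierHat (poissonConv q f) k
      = ((1 / 2 * Real.exp (-(q * |k|)) : ℝ) : ℂ) * fourierHat f k := by
  rw [poissonConv_eq_convolution, fourierHat_convolution hf (integrable_poissonConvKernel hq),
    fourierHat_poissonConvKernel hq, mul_comm]

end

/-- (i) The Fourier transform of the Poisson-kernel convolution:
`∫ e^{-iky} (P_q * f)(y) dy = (1/2) e^{-q|k|} f̂(k)` for `f ∈ L¹`. (ii) Consequently the
frequency-domain realization of the Neumann–Poincaré operator of the crescent domain:
for mean-zero `f_R, f_r ∈ L¹`, the functions `G_R = P_q * f_r` and `G_r = P_q * f_R`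
satisfy `Ĝ_R = (1/2)e^{-q|k|} f̂_r` and `Ĝ_r = (1/2)e^{-q|k|} f̂_R`, and in diagonalized
form `(Ĝ_r - Ĝ_R)/√2 = -(1/2)e^{-q|k|}(f̂_r - f̂_R)/√2` and
`(Ĝ_r + Ĝ_R)/√2 = (1/2)e^{-q|k|}(f̂_r + f̂_R)/√2`. -/
theorem poisson_kernel_fourier_and_crescent_NP_frequency (q : ℝ) (hq : 0 < q) :
    (∀ f : ℝ → ℂ, Integrable f → ∀ k : ℝ,
      (∫ y : ℝ, Complex.exp (-(Complex.I * k * y)) * poissonConv q f y)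
        = ((1/2 * Real.exp (-(q * |k|)) : ℝ) : ℂ) * fourierHat f k) ∧
    (∀ fR fr : ℝ → ℂ, Integrable fR → Integrable fr →
      (∫ t : ℝ, fR t) + (∫ t : ℝ, fr t) = 0 →
      ∀ k : ℝ,
        fourierHat (poissonConv q fr) k
          = ((1/2 * Real.exp (-(q * |k|)) : ℝ) : ℂ) * fourierHat fr k ∧
        fourierHat (poissonConv q fR) k
          = ((1/2 * Real.exp (-(q * |k|)) : ℝ) : ℂ) * fourierHat fR k ∧
        (fourierHat (poissonConv q fR) k - fourierHat (poissonConv q fr) k)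
            / ((Real.sqrt 2 : ℝ) : ℂ)
          = -((1/2 * Real.exp (-(q * |k|)) : ℝ) : ℂ) *
              ((fourierHat fr k - fourierHat fR k) / ((Real.sqrt 2 : ℝ) : ℂ)) ∧
        (fourierHat (poissonConv q fR) k + fourierHat (poissonConv q fr) k)
            / ((Real.sqrt 2 : ℝ) : ℂ)
          = ((1/2 * Real.exp (-(q * |k|)) : ℝ) : ℂ) *
              ((fourierHat fR k + fourierHat fr k) / ((Real.sqrt 2 : ℝ) : ℂ))) := by
  refine ⟨fun f hf k => ?_, fun fR fr hfR hfr _ k => ?_⟩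
  · rw [← fourierHat_poissonConv hq hf, fourierHat]
    exact integral_congr_ae (.of_forall fun y => mul_comm _ _)
  · rw [fourierHat_poissonConv hq hfR, fourierHat_poissonConv hq hfr]
    exact ⟨rfl, rfl, by ring, by ring⟩
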